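/- arXiv:1712.00859 — 3 statements merged into one kernel-verified Lean document; each statement's English description precedes it below -/
import Mathlib

section
/- Let w : [0,1] → [0,1] be continuous, strictly increasing, with w(0) = 0 and w(1) = 1, and let x, y ∈ ℝ^t be outcome profiles with nonnegative entries. Then the set C = {p ∈ Δ^{t−1} : Ṽ(p,x) ≥ Ṽ(p,y)} is a connected subset of the simplex Δ^{t−1}. -/
/-- The decision-weight form of the CPT value of the prospect `(p, z)` with
reference point `r`, value function `v`, probability weighting functions
`wp` (for gains) and `wm` (for losses), computed using a permutation `a`
of the indices ordering `z` decreasingly. -/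
noncomputable def cptVal {t : ℕ} (wp wm v : ℝ → ℝ) (r : ℝ) (p z : Fin t → ℝ)
    (a : Equiv.Perm (Fin t)) : ℝ :=
  ∑ j : Fin t,
    (if r ≤ z (a j) then
        wp (∑ k ∈ Finset.Iic j, p (a k)) - wp (∑ k ∈ Finset.Iio j, p (a k))
      else
        wm (∑ k ∈ Finset.Ici j, p (a k)) - wm (∑ k ∈ Finset.Ioi j, p (a k)))
      * v (z (a j))

/-- The CPT value `V^r(p,z)`, computed with a canonical permutation ordering `z`
decreasingly (the value is independent of the choice of such a permutation). -/
noncomputable def CPT {t : ℕ} (wp wm v : ℝ → ℝ) (r : ℝ) (p z : Fin t → ℝ) : ℝ :=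
  cptVal wp wm v r p z (Tuple.sort (fun j => -z j))

/-- `Ṽ(p,x)`: the CPT value of a nonnegative outcome profile `x` with reference
point `0`, identity value function, and single probability weighting function `w`.
For a probability vector `p` (and `w 1 = 1`) this agrees with
`x_{a_t} + ∑_{j<t} w(p_{a_1}+⋯+p_{a_j})(x_{a_j} − x_{a_{j+1}})` for any permutation
`a` ordering `x` decreasingly. -/
noncomputable def tildeV {t : ℕ} (w : ℝ → ℝ) (p x : Fin t → ℝ) : ℝ :=
  CPT w w id 0 p x

/-- `p` is a probability vector. -/
def IsProbVec {t : ℕ} (p : Fin t → ℝ) : Prop :=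
  (∀ j, 0 ≤ p j) ∧ ∑ j, p j = 1

/-!
Writing `Ṽ(p,x) = ∑ⱼ w(p{x ≥ x₍ⱼ₎}) (x₍ⱼ₎ - x₍ⱼ₊₁₎)`, with `x₍₀₎ ≥ x₍₁₎ ≥ ⋯` the sorted values
of `x`, shows that `Ṽ(·,x)` is monotone under first-order stochastic dominance. Hence the segment
from `p ∈ C` to the distribution obtained by moving the mass of every index to a Pareto-maximal
index dominating it (larger `x`, smaller `y`) stays in `C`. On Pareto-maximal indices `x` and `y`
are comonotone, so for distributions supported there every superlevel set of `y` is an initial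
segment of the indices sorted by `x`. Interpolating linearly between the `w`-distorted cumulative
sums, along that order, of two such distributions therefore makes both `Ṽ(·,x)` and `Ṽ(·,y)`
affine along the path, which thus stays in `C` as well. So `C` is path connected.
-/

open Finset

lemma exists_filter_range_eq_range {P : ℕ → Prop} [DecidablePred P] (hP : Antitone P) (n : ℕ) :
    ∃ m ≤ n, (range n).filter P = range m := by
  induction n with
  | zero => exact ⟨0, le_rfl, rfl⟩
  | succ n ih =>
    by_cases hn : P n
    · exact ⟨n + 1, le_rfl, filter_true_of_mem fun k hk =>
        hP (Nat.lt_succ_iff.1 (mem_range.1 hk)) hn⟩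
    · obtain ⟨m, hm, hfilter⟩ := ih
      exact ⟨m, hm.trans n.le_succ, by rw [range_add_one, filter_insert, if_neg hn, hfilter]⟩

section Superlevel

variable {ι : Type*} [Fintype ι]

noncomputable def superlevelMass (x v : ι → ℝ) (c : ℝ) : ℝ := ∑ i with c ≤ x i, v i

lemma superlevelMass_mem_Icc {v : ι → ℝ} (hv : v ∈ stdSimplex ℝ ι) (x : ι → ℝ) (c : ℝ) :
    superlevelMass x v c ∈ Set.Icc 0 1 :=
  ⟨sum_nonneg fun i _ => hv.1 i,
    hv.2 ▸ sum_le_sum_of_subset_of_nonneg (filter_subset _ _) fun i _ _ => hv.1 i⟩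

lemma superlevelMass_mono {x x' v : ι → ℝ} (hv : ∀ i, 0 ≤ v i) (h : ∀ i, x i ≤ x' i) (c : ℝ) :
    superlevelMass x v c ≤ superlevelMass x' v c :=
  sum_le_sum_of_subset_of_nonneg
    (fun i hi => mem_filter.2 ⟨mem_univ i, (mem_filter.1 hi).2.trans (h i)⟩) fun i _ _ => hv i

lemma superlevelMass_congr {x x' v : ι → ℝ} {c c' : ℝ}
    (h : ∀ i, v i ≠ 0 → (c ≤ x i ↔ c' ≤ x' i)) :
    superlevelMass x v c = superlevelMass x' v c' := by
  simp only [superlevelMass, sum_filter]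
  refine sum_congr rfl fun i _ => ?_
  by_cases hv : v i = 0
  · simp [hv]
  · simp [h i hv]

lemma isLinearMap_superlevelMass (x : ι → ℝ) (c : ℝ) :
    IsLinearMap ℝ fun v => superlevelMass x v c :=
  ⟨fun _ _ => sum_add_distrib, fun _ _ => (mul_sum _ _ _).symm⟩

lemma exists_superlevel_eq_of_comonotoneOn {x y : ι → ℝ} {M : Set ι}
    (hM : ∀ i ∈ M, ∀ k ∈ M, x i ≤ x k → y i ≤ y k) (c : ℝ) :
    ∃ c', ∀ i ∈ M, c ≤ y i ↔ c' ≤ x i := by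
  by_cases h : ∃ i ∈ M, c ≤ y i
  · obtain ⟨i₀, ⟨hi₀M, hi₀⟩, hmin⟩ :=
      Set.exists_min_image {i | i ∈ M ∧ c ≤ y i} x (Set.toFinite _) h
    exact ⟨x i₀, fun i hi => ⟨fun hci => hmin i ⟨hi, hci⟩,
      fun hxi => hi₀.trans (hM i₀ hi₀M i hi hxi)⟩⟩
  · push Not at h
    obtain ⟨b, hb⟩ := (Set.finite_range x).bddAbove
    exact ⟨b + 1, fun i hi => iff_of_false (h i hi).not_ge
      (by linarith [hb (Set.mem_range_self i)])⟩

variable [DecidableEq ι]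

noncomputable def pushforward (φ : ι → ι) (p : ι → ℝ) : ι → ℝ := fun i => ∑ k with φ k = i, p k

lemma pushforward_mem_stdSimplex {p : ι → ℝ} (hp : p ∈ stdSimplex ℝ ι) (φ : ι → ι) :
    pushforward φ p ∈ stdSimplex ℝ ι :=
  ⟨fun _ => sum_nonneg fun k _ => hp.1 k, (sum_fiberwise univ φ p).trans hp.2⟩

lemma pushforward_eq_zero {φ : ι → ι} {i : ι} (hi : i ∉ Set.range φ) (p : ι → ℝ) :
    pushforward φ p i = 0 :=
  sum_eq_zero fun k hk => absurd ⟨k, (mem_filter.1 hk).2⟩ hi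

lemma superlevelMass_pushforward (x : ι → ℝ) (φ : ι → ι) (p : ι → ℝ) (c : ℝ) :
    superlevelMass x (pushforward φ p) c = superlevelMass (x ∘ φ) p c := by
  simp only [superlevelMass, pushforward]
  rw [sum_fiberwise_eq_sum_filter]
  simp

end Superlevel

section Sorted

variable {t : ℕ}

noncomputable def sortPerm (x : Fin t → ℝ) : Equiv.Perm (Fin t) := Tuple.sort fun j => -x j

/-- Padded with zeros beyond `t`, so that Abel summation against it has no boundary term. -/
noncomputable def sortedVal (x v : Fin t → ℝ) (k : ℕ) : ℝ :=
  if h : k < t then v (sortPerm x ⟨k, h⟩) else 0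

noncomputable def sortedCumsum (x v : Fin t → ℝ) (m : ℕ) : ℝ :=
  ∑ k ∈ range m, sortedVal x v k

lemma sortedVal_val (x v : Fin t → ℝ) (j : Fin t) : sortedVal x v j = v (sortPerm x j) := by
  simp [sortedVal]

lemma sortedVal_nonneg {v : Fin t → ℝ} (hv : ∀ i, 0 ≤ v i) (x : Fin t → ℝ) (k : ℕ) :
    0 ≤ sortedVal x v k := by
  unfold sortedVal
  split
  exacts [hv _, le_rfl]

lemma sortedVal_self_antitone {x : Fin t → ℝ} (hx : ∀ i, 0 ≤ x i) : Antitone (sortedVal x x) := by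
  intro j k hjk
  by_cases hk : k < t
  · have := Tuple.monotone_sort (fun j => -x j)
      (show (⟨j, hjk.trans_lt hk⟩ : Fin t) ≤ ⟨k, hk⟩ from hjk)
    simpa [sortedVal, hk, hjk.trans_lt hk, sortPerm] using this
  · simpa [sortedVal, hk] using sortedVal_nonneg hx x j

lemma sortedCumsum_monotone {v : Fin t → ℝ} (hv : ∀ i, 0 ≤ v i) (x : Fin t → ℝ) :
    Monotone (sortedCumsum x v) := fun _ _ h =>
  sum_le_sum_of_subset_of_nonneg (range_mono h) fun k _ _ => sortedVal_nonneg hv x k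

lemma sortedCumsum_eq_sum_Iio (x v : Fin t → ℝ) (j : Fin t) :
    sortedCumsum x v j = ∑ k ∈ Iio j, v (sortPerm x k) := by
  rw [sortedCumsum, ← Nat.Iio_eq_range, ← Fin.map_valEmbedding_Iio, sum_map]
  exact sum_congr rfl fun k _ => sortedVal_val x v k

lemma sortedCumsum_succ_eq_sum_Iic (x v : Fin t → ℝ) (j : Fin t) :
    sortedCumsum x v (j + 1) = ∑ k ∈ Iic j, v (sortPerm x k) := by
  rw [sortedCumsum, Nat.range_succ_eq_Iic, ← Fin.map_valEmbedding_Iic, sum_map]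
  exact sum_congr rfl fun k _ => sortedVal_val x v k

lemma sortedCumsum_of_le (x v : Fin t → ℝ) {n : ℕ} (hn : t ≤ n) :
    sortedCumsum x v n = ∑ i, v i := by
  rw [sortedCumsum, ← sum_range_add_sum_Ico _ hn, ← Fin.sum_univ_eq_sum_range,
    ← Equiv.sum_comp (sortPerm x) v, add_eq_left.2]
  · exact sum_congr rfl fun k _ => sortedVal_val x v k
  · exact sum_eq_zero fun k hk => dif_neg (mem_Ico.1 hk).1.not_gt

lemma sortedCumsum_mem_Icc {p : Fin t → ℝ} (hp : p ∈ stdSimplex ℝ (Fin t)) (x : Fin t → ℝ)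
    (m : ℕ) : sortedCumsum x p m ∈ Set.Icc 0 1 := by
  refine ⟨sum_nonneg fun k _ => sortedVal_nonneg hp.1 x k, ?_⟩
  calc sortedCumsum x p m ≤ sortedCumsum x p (max m t) :=
        sortedCumsum_monotone hp.1 x (le_max_left m t)
    _ = 1 := by rw [sortedCumsum_of_le x p (le_max_right m t), hp.2]

lemma superlevelMass_eq_sum_sortedVal (x v : Fin t → ℝ) (c : ℝ) :
    superlevelMass x v c = ∑ k ∈ range t with c ≤ sortedVal x x k, sortedVal x v k := by
  rw [superlevelMass, sum_filter, sum_filter, ← Fin.sum_univ_eq_sum_range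
    (fun k => if c ≤ sortedVal x x k then sortedVal x v k else 0), ← Equiv.sum_comp (sortPerm x)]
  simp only [sortedVal_val]

lemma sortedCumsum_succ_eq_superlevelMass {x : Fin t → ℝ} (hx : ∀ i, 0 ≤ x i) (v : Fin t → ℝ)
    {j : ℕ} (hj : j < t) (hdrop : sortedVal x x (j + 1) < sortedVal x x j) :
    sortedCumsum x v (j + 1) = superlevelMass x v (sortedVal x x j) := by
  rw [superlevelMass_eq_sum_sortedVal, sortedCumsum]
  congr 1
  ext k
  simp only [mem_range, mem_filter]
  constructor
  · intro hk
    exact ⟨by omega, sortedVal_self_antitone hx (Nat.lt_succ_iff.1 hk)⟩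
  · rintro ⟨-, hk⟩
    by_contra! hjk
    exact (hdrop.trans_le hk).not_ge (sortedVal_self_antitone hx hjk)

end Sorted

section Representation

variable {t : ℕ} {w : ℝ → ℝ}

lemma tildeV_eq_sum_sortedCumsum (hw0 : w 0 = 0) {x : Fin t → ℝ} (hx : ∀ i, 0 ≤ x i)
    (v : Fin t → ℝ) :
    tildeV w v x = ∑ j ∈ range t,
      w (sortedCumsum x v (j + 1)) * (sortedVal x x j - sortedVal x x (j + 1)) := by
  have hdecision : tildeV w v x = ∑ j ∈ range t,
      (w (sortedCumsum x v (j + 1)) - w (sortedCumsum x v j)) * sortedVal x x j := by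
    rw [← Fin.sum_univ_eq_sum_range
      (fun j : ℕ => (w (sortedCumsum x v (j + 1)) - w (sortedCumsum x v j)) * sortedVal x x j)]
    unfold tildeV CPT cptVal
    refine sum_congr rfl fun j _ => ?_
    rw [if_pos (hx _), sortedCumsum_succ_eq_sum_Iic, sortedCumsum_eq_sum_Iio, sortedVal_val]
    rfl
  have htelescope : ∑ j ∈ range t, (w (sortedCumsum x v (j + 1)) * sortedVal x x (j + 1)
      - w (sortedCumsum x v j) * sortedVal x x j) = 0 := by
    rw [sum_range_sub (fun j => w (sortedCumsum x v j) * sortedVal x x j)]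
    simp [sortedVal, sortedCumsum, hw0]
  rw [hdecision, ← sub_eq_zero, ← sum_sub_distrib, ← htelescope]
  exact sum_congr rfl fun j _ => by ring

lemma tildeV_eq_sum_superlevelMass (hw0 : w 0 = 0) {x : Fin t → ℝ} (hx : ∀ i, 0 ≤ x i)
    (v : Fin t → ℝ) :
    tildeV w v x = ∑ j ∈ range t,
      w (superlevelMass x v (sortedVal x x j)) * (sortedVal x x j - sortedVal x x (j + 1)) := by
  rw [tildeV_eq_sum_sortedCumsum hw0 hx]
  refine sum_congr rfl fun j hj => ?_
  rcases (sortedVal_self_antitone hx j.le_succ).lt_or_eq with hdrop | hflat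
  · rw [sortedCumsum_succ_eq_superlevelMass hx v (mem_range.1 hj) hdrop]
  · rw [hflat, sub_self, mul_zero, mul_zero]

lemma tildeV_le_tildeV_of_superlevelMass_le (hw : MonotoneOn w (Set.Icc 0 1)) (hw0 : w 0 = 0)
    {x p q : Fin t → ℝ} (hx : ∀ i, 0 ≤ x i) (hp : p ∈ stdSimplex ℝ (Fin t))
    (hq : q ∈ stdSimplex ℝ (Fin t)) (h : ∀ c, superlevelMass x p c ≤ superlevelMass x q c) :
    tildeV w p x ≤ tildeV w q x := by
  rw [tildeV_eq_sum_superlevelMass hw0 hx, tildeV_eq_sum_superlevelMass hw0 hx]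
  exact sum_le_sum fun j _ => mul_le_mul_of_nonneg_right
    (hw (superlevelMass_mem_Icc hp x _) (superlevelMass_mem_Icc hq x _) (h _))
    (sub_nonneg.2 (sortedVal_self_antitone hx j.le_succ))

end Representation

section Prefixes

variable {t : ℕ}

def SuperlevelsArePrefixes (x z : Fin t → ℝ) (V : Set (Fin t → ℝ)) : Prop :=
  ∀ c, ∃ m ≤ t, ∀ v ∈ V, superlevelMass z v c = sortedCumsum x v m

lemma superlevelsArePrefixes_self {x : Fin t → ℝ} (hx : ∀ i, 0 ≤ x i) :
    SuperlevelsArePrefixes x x Set.univ := by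
  intro c
  obtain ⟨m, hm, hfilter⟩ := exists_filter_range_eq_range (P := fun k => c ≤ sortedVal x x k)
    (fun _ _ hjk hc => hc.trans (sortedVal_self_antitone hx hjk)) t
  exact ⟨m, hm, fun v _ => by rw [superlevelMass_eq_sum_sortedVal, hfilter, sortedCumsum]⟩

lemma superlevelsArePrefixes_of_comonotoneOn {x y : Fin t → ℝ} (hx : ∀ i, 0 ≤ x i)
    {M : Set (Fin t)} (hM : ∀ i ∈ M, ∀ k ∈ M, x i ≤ x k → y i ≤ y k) :
    SuperlevelsArePrefixes x y {v | ∀ i ∉ M, v i = 0} := by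
  intro c
  obtain ⟨c', hc'⟩ := exists_superlevel_eq_of_comonotoneOn hM c
  obtain ⟨m, hm, hprefix⟩ := superlevelsArePrefixes_self hx c'
  refine ⟨m, hm, fun v hv => ?_⟩
  rw [← hprefix v trivial]
  exact superlevelMass_congr fun i hvi => hc' i (by_contra fun hi => hvi (hv i hi))

lemma SuperlevelsArePrefixes.tildeV_eq {w : ℝ → ℝ} (hw0 : w 0 = 0) {x z : Fin t → ℝ}
    {V : Set (Fin t → ℝ)} (h : SuperlevelsArePrefixes x z V) (hz : ∀ i, 0 ≤ z i)
    {p q r : Fin t → ℝ} (hp : p ∈ V) (hq : q ∈ V) (hr : r ∈ V) {a b : ℝ}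
    (hw : ∀ m ≤ t, w (sortedCumsum x r m) =
      a * w (sortedCumsum x p m) + b * w (sortedCumsum x q m)) :
    tildeV w r z = a * tildeV w p z + b * tildeV w q z := by
  simp only [tildeV_eq_sum_superlevelMass hw0 hz, mul_sum, ← sum_add_distrib]
  refine sum_congr rfl fun j _ => ?_
  obtain ⟨m, hm, hprefix⟩ := h (sortedVal z z j)
  rw [hprefix r hr, hprefix p hp, hprefix q hq, hw m hm]
  ring

end Prefixes

section Interpolation

variable {t : ℕ}

noncomputable def ofSortedCumsum (x : Fin t → ℝ) (F : ℕ → ℝ) : Fin t → ℝ :=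
  fun i => F ((sortPerm x).symm i + 1) - F ((sortPerm x).symm i)

lemma sortedCumsum_ofSortedCumsum (x : Fin t → ℝ) (F : ℕ → ℝ) {m : ℕ} (hm : m ≤ t) :
    sortedCumsum x (ofSortedCumsum x F) m = F m - F 0 := by
  rw [sortedCumsum, ← sum_range_sub F m]
  refine sum_congr rfl fun k hk => ?_
  have hkt : k < t := (mem_range.1 hk).trans_le hm
  simp [sortedVal, hkt, ofSortedCumsum]

lemma ofSortedCumsum_mem_stdSimplex (x : Fin t → ℝ) {F : ℕ → ℝ} (hF : Monotone F)
    (h0 : F 0 = 0) (ht : F t = 1) : ofSortedCumsum x F ∈ stdSimplex ℝ (Fin t) :=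
  ⟨fun _ => sub_nonneg.2 (hF (Nat.le_succ _)), by
    rw [← sortedCumsum_of_le x _ le_rfl, sortedCumsum_ofSortedCumsum x F le_rfl, ht, h0, sub_zero]⟩

lemma ofSortedCumsum_sortedCumsum (x v : Fin t → ℝ) : ofSortedCumsum x (sortedCumsum x v) = v := by
  funext i
  simp [ofSortedCumsum, sortedCumsum, sum_range_succ, sortedVal_val]

end Interpolation

lemma MonotoneOn.mapsTo_Icc_self {f : ℝ → ℝ} {a b : ℝ} (h : MonotoneOn f (Set.Icc a b))
    (ha : f a = a) (hb : f b = b) : Set.MapsTo f (Set.Icc a b) (Set.Icc a b) := by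
  simpa only [ha, hb] using h.mapsTo_Icc

lemma exists_continuous_monotone_inverse {w : ℝ → ℝ} (hwc : ContinuousOn w (Set.Icc 0 1))
    (hwm : StrictMonoOn w (Set.Icc 0 1)) (hw0 : w 0 = 0) (hw1 : w 1 = 1) :
    ∃ g : ℝ → ℝ, Continuous g ∧ Monotone g ∧ (∀ u ∈ Set.Icc (0 : ℝ) 1, w (g u) = u) ∧
      ∀ c ∈ Set.Icc (0 : ℝ) 1, g (w c) = c := by
  have hmaps := hwm.monotoneOn.mapsTo_Icc_self hw0 hw1
  have hsurj : Function.Surjective (hmaps.restrict w _ _) := fun u => by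
    obtain ⟨c, hc, hcu⟩ := hwc.surjOn_Icc (Set.left_mem_Icc.2 zero_le_one)
      (Set.right_mem_Icc.2 zero_le_one) (by rw [hw0, hw1]; exact u.2)
    exact ⟨⟨c, hc⟩, Subtype.ext hcu⟩
  let e := StrictMono.orderIsoOfSurjective (hmaps.restrict w _ _) (fun a b h => hwm a.2 b.2 h) hsurj
  refine ⟨fun u => e.symm (Set.projIcc 0 1 zero_le_one u), ?_, ?_, ?_, ?_⟩
  · exact continuous_subtype_val.comp (e.symm.continuous.comp continuous_projIcc)
  · exact fun a b h => e.symm.monotone (Set.monotone_projIcc _ h)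
  · intro u hu
    dsimp only
    rw [Set.projIcc_of_mem _ hu]
    exact congrArg Subtype.val (e.apply_symm_apply ⟨u, hu⟩)
  · intro c hc
    dsimp only
    rw [Set.projIcc_of_mem _ (hmaps hc)]
    exact congrArg Subtype.val (e.symm_apply_apply ⟨c, hc⟩)

lemma exists_path_weighted_sortedCumsum_affine {t : ℕ} {w : ℝ → ℝ}
    (hwc : ContinuousOn w (Set.Icc 0 1)) (hwm : StrictMonoOn w (Set.Icc 0 1)) (hw0 : w 0 = 0)
    (hw1 : w 1 = 1) (x : Fin t → ℝ) {p q : Fin t → ℝ} (hp : p ∈ stdSimplex ℝ (Fin t))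
    (hq : q ∈ stdSimplex ℝ (Fin t)) :
    ∃ r : ℝ → Fin t → ℝ, Continuous r ∧ r 0 = p ∧ r 1 = q ∧ ∀ τ ∈ Set.Icc (0 : ℝ) 1,
      r τ ∈ stdSimplex ℝ (Fin t) ∧ (∀ i, p i = 0 → q i = 0 → r τ i = 0) ∧
      ∀ m ≤ t, w (sortedCumsum x (r τ) m) =
        (1 - τ) * w (sortedCumsum x p m) + τ * w (sortedCumsum x q m) := by
  obtain ⟨g, hgc, hgm, hwg, hgw⟩ := exists_continuous_monotone_inverse hwc hwm hw0 hw1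
  have hmaps := hwm.monotoneOn.mapsTo_Icc_self hw0 hw1
  have hP := sortedCumsum_mem_Icc hp x
  have hQ := sortedCumsum_mem_Icc hq x
  have hmix : ∀ τ ∈ Set.Icc (0 : ℝ) 1, ∀ m, (1 - τ) * w (sortedCumsum x p m) +
      τ * w (sortedCumsum x q m) ∈ Set.Icc 0 1 := fun τ hτ m =>
    convex_Icc 0 1 (hmaps (hP m)) (hmaps (hQ m)) (sub_nonneg.2 hτ.2) hτ.1 (by ring)
  let F : ℝ → ℕ → ℝ := fun τ m =>
    g ((1 - τ) * w (sortedCumsum x p m) + τ * w (sortedCumsum x q m))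
  have hF0 (τ : ℝ) : F τ 0 = 0 := by
    simpa [F, sortedCumsum, hw0] using hgw 0 (Set.left_mem_Icc.2 zero_le_one)
  have hFt (τ : ℝ) : F τ t = 1 := by
    simpa [F, sortedCumsum_of_le x _ le_rfl, hp.2, hq.2, hw1] using
      hgw 1 (Set.right_mem_Icc.2 zero_le_one)
  have hFmono : ∀ τ ∈ Set.Icc (0 : ℝ) 1, Monotone (F τ) := fun τ hτ m n hmn =>
    hgm (add_le_add
      (mul_le_mul_of_nonneg_left (hwm.monotoneOn (hP m) (hP n)
        (sortedCumsum_monotone hp.1 x hmn)) (sub_nonneg.2 hτ.2))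
      (mul_le_mul_of_nonneg_left (hwm.monotoneOn (hQ m) (hQ n)
        (sortedCumsum_monotone hq.1 x hmn)) hτ.1))
  refine ⟨fun τ => ofSortedCumsum x (F τ), ?_, ?_, ?_, fun τ hτ =>
    ⟨ofSortedCumsum_mem_stdSimplex x (hFmono τ hτ) (hF0 τ) (hFt τ), fun i hpi hqi => ?_,
      fun m hm => ?_⟩⟩
  · exact continuous_pi fun i => (hgc.comp (by fun_prop)).sub (hgc.comp (by fun_prop))
  · conv_rhs => rw [← ofSortedCumsum_sortedCumsum x p]
    simp [F, hgw _ (hP _)]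
  · conv_rhs => rw [← ofSortedCumsum_sortedCumsum x q]
    simp [F, hgw _ (hQ _)]
  · simp [ofSortedCumsum, F, sortedCumsum, sum_range_succ, sortedVal_val, hpi, hqi]
  · rw [sortedCumsum_ofSortedCumsum x _ hm, hF0, sub_zero]
    exact hwg _ (hmix τ hτ m)

lemma exists_dominating_map_comonotone {ι : Type*} [Finite ι] (x y : ι → ℝ) :
    ∃ φ : ι → ι, (∀ k, x k ≤ x (φ k) ∧ y (φ k) ≤ y k) ∧
      ∀ i k, x (φ i) ≤ x (φ k) → y (φ i) ≤ y (φ k) := by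
  -- `φ k` is a Pareto-maximal index dominating `k`.
  let z : ι → ℝ × ℝ := fun i => (x i, -y i)
  have hmax : ∀ k, ∃ m, z k ≤ z m ∧ Maximal (· ∈ Set.range z) (z m) := fun k => by
    obtain ⟨b, hkb, hb⟩ := (Set.finite_range z).exists_le_maximal (Set.mem_range_self k)
    obtain ⟨m, rfl⟩ := hb.prop
    exact ⟨m, hkb, hb⟩
  choose φ hφ using hmax
  refine ⟨φ, fun k => ⟨(hφ k).1.1, neg_le_neg_iff.1 (hφ k).1.2⟩, fun i k hik => ?_⟩
  by_contra! hlt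
  exact (hφ i).2.not_gt (Set.mem_range_self _) (Prod.lt_iff.2 (Or.inr ⟨hik, neg_lt_neg hlt⟩))

section ConstraintSet

variable {t : ℕ} {w : ℝ → ℝ} {x y : Fin t → ℝ}

def constraintSet (w : ℝ → ℝ) (x y : Fin t → ℝ) : Set (Fin t → ℝ) :=
  {p | p ∈ stdSimplex ℝ (Fin t) ∧ tildeV w p y ≤ tildeV w p x}

lemma joinedIn_pushforward (hwm : MonotoneOn w (Set.Icc 0 1)) (hw0 : w 0 = 0)
    (hx : ∀ i, 0 ≤ x i) (hy : ∀ i, 0 ≤ y i) {φ : Fin t → Fin t}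
    (hφ : ∀ k, x k ≤ x (φ k) ∧ y (φ k) ≤ y k) {p : Fin t → ℝ} (hp : p ∈ constraintSet w x y) :
    JoinedIn (constraintSet w x y) p (pushforward φ p) := by
  let D := stdSimplex ℝ (Fin t) ∩
    (⋂ c, {r | superlevelMass x p c ≤ superlevelMass x r c}) ∩
    ⋂ c, {r | superlevelMass y r c ≤ superlevelMass y p c}
  have hD : Convex ℝ D := ((convex_stdSimplex ℝ _).inter
    (convex_iInter fun c => convex_halfSpace_ge (isLinearMap_superlevelMass x c) _)).inter
    (convex_iInter fun c => convex_halfSpace_le (isLinearMap_superlevelMass y c) _)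
  have hDS : D ⊆ constraintSet w x y := fun r ⟨⟨hr, hxr⟩, hyr⟩ =>
    ⟨hr, calc tildeV w r y ≤ tildeV w p y :=
          tildeV_le_tildeV_of_superlevelMass_le hwm hw0 hy hr hp.1 (Set.mem_iInter.1 hyr)
      _ ≤ tildeV w p x := hp.2
      _ ≤ tildeV w r x :=
          tildeV_le_tildeV_of_superlevelMass_le hwm hw0 hx hp.1 hr (Set.mem_iInter.1 hxr)⟩
  have hpD : p ∈ D :=
    ⟨⟨hp.1, Set.mem_iInter.2 fun _ => Set.mem_ofPred.2 le_rfl⟩,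
      Set.mem_iInter.2 fun _ => Set.mem_ofPred.2 le_rfl⟩
  have hTD : pushforward φ p ∈ D :=
    ⟨⟨pushforward_mem_stdSimplex hp.1 φ, Set.mem_iInter.2 fun c =>
        (superlevelMass_mono hp.1.1 (x' := x ∘ φ) (fun k => (hφ k).1) c).trans_eq
          (superlevelMass_pushforward x φ p c).symm⟩,
      Set.mem_iInter.2 fun c => (superlevelMass_pushforward y φ p c).trans_le
        (superlevelMass_mono hp.1.1 (x := y ∘ φ) (fun k => (hφ k).2) c)⟩
  exact JoinedIn.of_segment_subset ((hD.segment_subset hpD hTD).trans hDS)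

lemma joinedIn_of_comonotoneOn (hwc : ContinuousOn w (Set.Icc 0 1))
    (hwm : StrictMonoOn w (Set.Icc 0 1)) (hw0 : w 0 = 0) (hw1 : w 1 = 1)
    (hx : ∀ i, 0 ≤ x i) (hy : ∀ i, 0 ≤ y i) {M : Set (Fin t)}
    (hM : ∀ i ∈ M, ∀ k ∈ M, x i ≤ x k → y i ≤ y k) {p q : Fin t → ℝ}
    (hp : p ∈ constraintSet w x y) (hq : q ∈ constraintSet w x y)
    (hpM : ∀ i ∉ M, p i = 0) (hqM : ∀ i ∉ M, q i = 0) :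
    JoinedIn (constraintSet w x y) p q := by
  obtain ⟨r, hrc, hr0, hr1, hr⟩ :=
    exists_path_weighted_sortedCumsum_affine hwc hwm hw0 hw1 x hp.1 hq.1
  refine JoinedIn.ofLine hrc.continuousOn hr0 hr1 ?_
  rintro _ ⟨τ, hτ, rfl⟩
  obtain ⟨hrτ, hrτM, hwr⟩ := hr τ hτ
  have hrM : ∀ i ∉ M, r τ i = 0 := fun i hi => hrτM i (hpM i hi) (hqM i hi)
  refine ⟨hrτ, ?_⟩
  rw [(superlevelsArePrefixes_self hx).tildeV_eq hw0 hx trivial trivial trivial hwr,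
    (superlevelsArePrefixes_of_comonotoneOn hx hM).tildeV_eq hw0 hy hpM hqM hrM hwr]
  exact add_le_add (mul_le_mul_of_nonneg_left hp.2 (sub_nonneg.2 hτ.2))
    (mul_le_mul_of_nonneg_left hq.2 hτ.1)

end ConstraintSet

/-- for any probability weighting function `w` and nonnegative
outcome profiles `x, y`, the single-deviation constraint set
`{p ∈ Δ^{t−1} : Ṽ(p,x) ≥ Ṽ(p,y)}` is a connected subset of the simplex. -/
theorem single_deviation_constraint_set_connected {t : ℕ} (w : ℝ → ℝ)
    (hwc : ContinuousOn w (Set.Icc 0 1)) (hwm : StrictMonoOn w (Set.Icc 0 1))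
    (hw0 : w 0 = 0) (hw1 : w 1 = 1)
    (x y : Fin t → ℝ) (hx : ∀ j, 0 ≤ x j) (hy : ∀ j, 0 ≤ y j) :
    IsPreconnected {p : Fin t → ℝ | IsProbVec p ∧ tildeV w p y ≤ tildeV w p x} := by
  change IsPreconnected (constraintSet w x y)
  obtain ⟨φ, hφ, hcomono⟩ := exists_dominating_map_comonotone x y
  have hpush : ∀ p ∈ constraintSet w x y, JoinedIn (constraintSet w x y) p (pushforward φ p) :=
    fun p hp => joinedIn_pushforward hwm.monotoneOn hw0 hx hy hφ hp
  have hjoined : ∀ p ∈ constraintSet w x y, ∀ q ∈ constraintSet w x y,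
      JoinedIn (constraintSet w x y) p q := fun p hp q hq =>
    (hpush p hp).trans <| (joinedIn_of_comonotoneOn hwc hwm hw0 hw1 hx hy
      (M := Set.range φ) (by simpa using hcomono) (hpush p hp).target_mem (hpush q hq).target_mem
      (fun _ hi => pushforward_eq_zero hi p) (fun _ hi => pushforward_eq_zero hi q)).trans
      (hpush q hq).symm
  rcases (constraintSet w x y).eq_empty_or_nonempty with hempty | hne
  · exact hempty ▸ isPreconnected_empty
  · exact (isPathConnected_iff.2 ⟨hne, hjoined⟩).isConnected.isPreconnected
end

section
/- Let w : [0,1] → [0,1] be continuous, strictly increasing, with w(0) = 0 and w(1) = 1, and let x, y ∈ ℝ^t be nonnegative outcome profiles that are similarly ranked, i.e., there is a common permutation a = (a_1,…,a_t) of (1,…,t) with x_{a_1} ≥ … ≥ x_{a_t} and y_{a_1} ≥ … ≥ y_{a_t}. Then the map φ : Δ^{t−1} → ℝ^{t−1} defined by φ(p) = (w(p_{a_1}), w(p_{a_1}+p_{a_2}), …, w(p_{a_1}+…+p_{a_{t−1}})) is a homeomorphism from Δ^{t−1} onto L = {l ∈ ℝ^{t−1} : 0 ≤ l_1 ≤ l_2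 ≤ … ≤ l_{t−1} ≤ 1}, and the image φ({p ∈ Δ^{t−1} : Ṽ(p,x) ≥ Ṽ(p,y)}) is a convex subset of L (it is L intersected with a closed half-space); in particular {p ∈ Δ^{t−1} : Ṽ(p,x) ≥ Ṽ(p,y)} is connected. -/
lemma finIioSucc {t : ℕ} (i : Fin t) :
    Finset.Iio (i.succ : Fin (t+1)) = Finset.Iic (Fin.castSucc i) := by
  ext k
  simp only [Finset.mem_Iio, Finset.mem_Iic, Fin.lt_def, Fin.le_def, Fin.val_succ,
    Fin.coe_castSucc]
  omega

lemma finIicLast {t : ℕ} : Finset.Iic (Fin.last t) = Finset.univ := by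
  ext k; simp [Fin.le_last]

lemma finIicZero {t : ℕ} : Finset.Iic (0 : Fin (t+1)) = {0} := by
  ext k; simp [Fin.le_zero_iff]

lemma finIioZero {t : ℕ} : Finset.Iio (0 : Fin (t+1)) = ∅ := by
  ext k; simp

lemma sum_Iic_succ {t : ℕ} (f : Fin (t+1) → ℝ) (i : Fin t) :
    ∑ k ∈ Finset.Iic i.succ, f k = (∑ k ∈ Finset.Iic (Fin.castSucc i), f k) + f i.succ := by
  rw [← finIioSucc, ← Finset.Iio_insert, Finset.sum_insert (by simp)]
  ring

lemma cptVal_gains {t : ℕ} (w : ℝ → ℝ) (hw0 : w 0 = 0) (hw1 : w 1 = 1)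
    (p x : Fin (t+1) → ℝ) (hp : ∑ j, p j = 1) (hx : ∀ j, 0 ≤ x j)
    (b : Equiv.Perm (Fin (t+1))) :
    cptVal w w id 0 p x b =
      x (b (Fin.last t)) + ∑ i : Fin t,
        w (∑ k ∈ Finset.Iic (Fin.castSucc i), p (b k)) *
          (x (b (Fin.castSucc i)) - x (b i.succ)) := by
  have h1 : cptVal w w id 0 p x b =
      ∑ j : Fin (t+1), (w (∑ k ∈ Finset.Iic j, p (b k)) - w (∑ k ∈ Finset.Iio j, p (b k)))
        * x (b j) := by
    unfold cptVal
    exact Finset.sum_congr rfl fun j _ => by rw [if_pos (hx (b j)), id_eq]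
  have hlast : w (∑ k ∈ Finset.Iic (Fin.last t), p (b k)) = 1 := by
    rw [finIicLast]
    rw [show ∑ k, p (b k) = 1 from (Equiv.sum_comp b p).trans hp, hw1]
  calc cptVal w w id 0 p x b
      = (∑ j : Fin (t+1), w (∑ k ∈ Finset.Iic j, p (b k)) * x (b j))
        - ∑ j : Fin (t+1), w (∑ k ∈ Finset.Iio j, p (b k)) * x (b j) := by
        rw [h1, ← Finset.sum_sub_distrib]
        exact Finset.sum_congr rfl fun j _ => by ring
    _ = ((∑ i : Fin t, w (∑ k ∈ Finset.Iic (Fin.castSucc i), p (b k)) * x (b (Fin.castSucc i)))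
          + x (b (Fin.last t)))
        - ∑ i : Fin t, w (∑ k ∈ Finset.Iic (Fin.castSucc i), p (b k)) * x (b i.succ) := by
        rw [Fin.sum_univ_castSucc
          (f := fun j => w (∑ k ∈ Finset.Iic j, p (b k)) * x (b j)), hlast, one_mul]
        rw [Fin.sum_univ_succ
          (f := fun j => w (∑ k ∈ Finset.Iio j, p (b k)) * x (b j))]
        rw [finIioZero, Finset.sum_empty, hw0, zero_mul, zero_add]
        simp only [finIioSucc]
    _ = _ := by
        rw [show ∑ i : Fin t, w (∑ k ∈ Finset.Iic (Fin.castSucc i), p (b k)) *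
            (x (b (Fin.castSucc i)) - x (b i.succ))
          = (∑ i : Fin t, w (∑ k ∈ Finset.Iic (Fin.castSucc i), p (b k)) * x (b (Fin.castSucc i)))
            - ∑ i : Fin t, w (∑ k ∈ Finset.Iic (Fin.castSucc i), p (b k)) * x (b i.succ) by
            rw [← Finset.sum_sub_distrib]; exact Finset.sum_congr rfl fun i _ => by ring]
        ring

lemma sum_Iic_perm_eq {t : ℕ} (p x : Fin (t+1) → ℝ) (b a : Equiv.Perm (Fin (t+1)))
    (hb : Antitone (fun j => x (b j))) (ha : Antitone (fun j => x (a j)))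
    (hba : ∀ j, x (b j) = x (a j)) (i : Fin t)
    (hi : x (a i.succ) < x (a (Fin.castSucc i))) :
    ∑ k ∈ Finset.Iic (Fin.castSucc i), p (b k) =
      ∑ k ∈ Finset.Iic (Fin.castSucc i), p (a k) := by
  have key : ∀ (c : Equiv.Perm (Fin (t+1))), Antitone (fun j => x (c j)) →
      (∀ j, x (c j) = x (a j)) →
      Finset.image c (Finset.Iic (Fin.castSucc i)) =
        Finset.univ.filter (fun m => x (a (Fin.castSucc i)) ≤ x m) := by
    intro c hc hca
    ext m
    simp only [Finset.mem_image, Finset.mem_filter, Finset.mem_univ, true_and, Finset.mem_Iic]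
    constructor
    · rintro ⟨k, hk, rfl⟩
      calc x (a (Fin.castSucc i)) = x (c (Fin.castSucc i)) := (hca _).symm
        _ ≤ x (c k) := hc hk
    · intro hm
      refine ⟨c.symm m, ?_, c.apply_symm_apply m⟩
      by_contra hlt
      push_neg at hlt
      have h1 : i.succ ≤ c.symm m := by
        rw [Fin.le_def]
        rw [Fin.lt_def] at hlt
        simp only [Fin.coe_castSucc] at hlt
        simp only [Fin.val_succ]
        omega
      have h2 := hc h1
      simp only [c.apply_symm_apply] at h2
      rw [hca i.succ] at h2
      linarith
  have hsum : ∀ (c : Equiv.Perm (Fin (t+1))),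
      ∑ k ∈ Finset.Iic (Fin.castSucc i), p (c k) =
        ∑ m ∈ Finset.image c (Finset.Iic (Fin.castSucc i)), p m := by
    intro c
    rw [Finset.sum_image (fun k _ l _ h => c.injective h)]
  rw [hsum b, hsum a, key b hb hba, key a ha (fun _ => rfl)]

lemma tildeV_repr {t : ℕ} (w : ℝ → ℝ) (hw0 : w 0 = 0) (hw1 : w 1 = 1)
    (p x : Fin (t+1) → ℝ) (hp : ∑ j, p j = 1) (hx : ∀ j, 0 ≤ x j)
    (a : Equiv.Perm (Fin (t+1))) (hax : Antitone (fun j => x (a j))) :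
    tildeV w p x = x (a (Fin.last t)) + ∑ i : Fin t,
        w (∑ k ∈ Finset.Iic (Fin.castSucc i), p (a k)) *
          (x (a (Fin.castSucc i)) - x (a i.succ)) := by
  set b := Tuple.sort (fun j => -x j) with hbdef
  have hbm : Monotone ((fun j => -x j) ∘ b) := Tuple.monotone_sort _
  have hb : Antitone (fun j => x (b j)) := by
    intro i j hij
    have := hbm hij
    simpa using this
  have hba : ∀ j, x (b j) = x (a j) := by
    have h2 : Monotone ((fun j => -x j) ∘ a) := by
      intro i j hij; simpa using hax hij
    have h3 := Tuple.unique_monotone hbm h2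
    intro j
    have := congrFun h3 j
    simpa using this
  rw [tildeV, CPT, ← hbdef, cptVal_gains w hw0 hw1 p x hp hx b]
  congr 1
  · rw [hba]
  refine Finset.sum_congr rfl fun i _ => ?_
  rw [hba, hba]
  rcases eq_or_lt_of_le (hax (Fin.castSucc_le_succ i)) with h | h
  · simp only at h
    rw [h]; simp
  · rw [sum_Iic_perm_eq p x b a hb hax hba i h]

/-- if the nonnegative outcome profiles `x, y ∈ ℝ^{t+1}` are similarly
ranked, via a common permutation `a` ordering both decreasingly, then the map
`φ(p) = (w(p_{a_1}), w(p_{a_1}+p_{a_2}), …, w(p_{a_1}+⋯+p_{a_t}))` is a homeomorphism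
of the simplex `Δ^t` onto `L = {l : 0 ≤ l_1 ≤ … ≤ l_t ≤ 1}`, and it maps the
constraint set `{p ∈ Δ^t : Ṽ(p,x) ≥ Ṽ(p,y)}` onto the intersection of `L` with a
closed half-space, a convex set; in particular the constraint set is connected. -/
theorem similarly_ranked_constraint_set_convex_image {t : ℕ} (w : ℝ → ℝ)
    (hwc : ContinuousOn w (Set.Icc 0 1)) (hwm : StrictMonoOn w (Set.Icc 0 1))
    (hw0 : w 0 = 0) (hw1 : w 1 = 1)
    (x y : Fin (t + 1) → ℝ) (hx : ∀ j, 0 ≤ x j) (hy : ∀ j, 0 ≤ y j)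
    (a : Equiv.Perm (Fin (t + 1)))
    (hax : Antitone (fun j => x (a j))) (hay : Antitone (fun j => y (a j))) :
    (∃ e : {p : Fin (t + 1) → ℝ // IsProbVec p} ≃ₜ
        {l : Fin t → ℝ // Monotone l ∧ ∀ i, l i ∈ Set.Icc (0 : ℝ) 1},
      ∀ p : {p : Fin (t + 1) → ℝ // IsProbVec p},
        (e p : Fin t → ℝ) =
          fun i => w (∑ k ∈ Finset.Iic (Fin.castSucc i), (p : Fin (t + 1) → ℝ) (a k)))
    ∧ (∃ (c : Fin t → ℝ) (d : ℝ),
        (fun p : Fin (t + 1) → ℝ =>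
            (fun i => w (∑ k ∈ Finset.Iic (Fin.castSucc i), p (a k)) : Fin t → ℝ)) ''
          {p | IsProbVec p ∧ tildeV w p y ≤ tildeV w p x}
        = {l : Fin t → ℝ | Monotone l ∧ ∀ i, l i ∈ Set.Icc (0 : ℝ) 1}
            ∩ {l | ∑ i, c i * l i ≤ d})
    ∧ Convex ℝ
        ((fun p : Fin (t + 1) → ℝ =>
            (fun i => w (∑ k ∈ Finset.Iic (Fin.castSucc i), p (a k)) : Fin t → ℝ)) ''
          {p | IsProbVec p ∧ tildeV w p y ≤ tildeV w p x})
    ∧ IsPreconnected {p : Fin (t + 1) → ℝ | IsProbVec p ∧ tildeV w p y ≤ tildeV w p x} := by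
  classical
  set φ : (Fin (t + 1) → ℝ) → (Fin t → ℝ) :=
    fun p : Fin (t + 1) → ℝ =>
      (fun i => w (∑ k ∈ Finset.Iic (Fin.castSucc i), p (a k)) : Fin t → ℝ) with hφdef
  -- basic facts on partial sums
  have hmemIcc : ∀ (p : Fin (t + 1) → ℝ), IsProbVec p → ∀ j : Fin (t + 1),
      (∑ k ∈ Finset.Iic j, p (a k)) ∈ Set.Icc (0 : ℝ) 1 := by
    intro p hp j
    constructor
    · exact Finset.sum_nonneg fun k _ => hp.1 _
    · calc ∑ k ∈ Finset.Iic j, p (a k) ≤ ∑ k, p (a k) :=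
            Finset.sum_le_sum_of_subset_of_nonneg (Finset.subset_univ _) fun k _ _ => hp.1 _
        _ = ∑ k, p k := Equiv.sum_comp a p
        _ = 1 := hp.2
  have h0mem : (0 : ℝ) ∈ Set.Icc (0 : ℝ) 1 := ⟨le_refl 0, zero_le_one⟩
  have h1mem : (1 : ℝ) ∈ Set.Icc (0 : ℝ) 1 := ⟨zero_le_one, le_refl 1⟩
  have hφmem : ∀ p, IsProbVec p →
      (Monotone (φ p) ∧ ∀ i, φ p i ∈ Set.Icc (0 : ℝ) 1) := by
    intro p hp
    constructor
    · intro i i' hii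
      exact hwm.monotoneOn (hmemIcc p hp _) (hmemIcc p hp _)
        (Finset.sum_le_sum_of_subset_of_nonneg
          (Finset.Iic_subset_Iic.mpr (Fin.castSucc_le_castSucc_iff.mpr hii))
          fun k _ _ => hp.1 _)
    · intro i
      constructor
      · rw [← hw0]
        exact hwm.monotoneOn h0mem (hmemIcc p hp _) (hmemIcc p hp _).1
      · rw [← hw1]
        exact hwm.monotoneOn (hmemIcc p hp _) h1mem (hmemIcc p hp _).2
  -- injectivity
  have hφinj : ∀ p q, IsProbVec p → IsProbVec q → φ p = φ q → p = q := by
    intro p q hp hq h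
    have hT : ∀ j : Fin (t + 1),
        ∑ k ∈ Finset.Iic j, p (a k) = ∑ k ∈ Finset.Iic j, q (a k) := by
      intro j
      refine Fin.lastCases ?_ ?_ j
      · rw [finIicLast]
        rw [show ∑ k, p (a k) = 1 from (Equiv.sum_comp a p).trans hp.2,
          show ∑ k, q (a k) = 1 from (Equiv.sum_comp a q).trans hq.2]
      · intro i
        exact hwm.injOn (hmemIcc p hp _) (hmemIcc q hq _) (congrFun h i)
    have hk : ∀ k, p (a k) = q (a k) := by
      intro k
      refine Fin.cases ?_ ?_ k
      · have h0 := hT 0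
        rwa [finIicZero, Finset.sum_singleton, Finset.sum_singleton] at h0
      · intro i
        have h1 := hT i.succ
        have h2 := hT (Fin.castSucc i)
        rw [sum_Iic_succ, sum_Iic_succ] at h1
        linarith
    funext m
    have := hk (a.symm m)
    rwa [Equiv.apply_symm_apply] at this
  -- surjectivity
  have hφsurj : ∀ l : Fin t → ℝ, Monotone l → (∀ i, l i ∈ Set.Icc (0 : ℝ) 1) →
      ∃ p, IsProbVec p ∧ φ p = l := by
    intro l hlm hlb
    have hiv : ∀ i, ∃ z, z ∈ Set.Icc (0 : ℝ) 1 ∧ w z = l i := by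
      intro i
      have hmem : l i ∈ Set.Icc (w 0) (w 1) := by rw [hw0, hw1]; exact hlb i
      obtain ⟨z, hz, hwz⟩ := intermediate_value_Icc zero_le_one hwc hmem
      exact ⟨z, hz, hwz⟩
    choose u hu hwu using hiv
    have humono : Monotone u := by
      intro i j hij
      exact (hwm.le_iff_le (hu i) (hu j)).mp (by rw [hwu, hwu]; exact hlm hij)
    set U : Fin (t + 1) → ℝ := fun j => if h : (j : ℕ) < t then u ⟨j, h⟩ else 1 with hU
    have hUcs : ∀ i : Fin t, U (Fin.castSucc i) = u i := by
      intro i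
      simp only [hU, Fin.coe_castSucc, i.isLt, dif_pos, Fin.eta]
    have hUlast : U (Fin.last t) = 1 := by simp [hU]
    have hUmem : ∀ j, U j ∈ Set.Icc (0 : ℝ) 1 := by
      intro j
      rw [hU]; dsimp only
      split
      · exact hu _
      · exact h1mem
    have hUmono : Monotone U := by
      intro j j' hjj
      have hjj' : (j : ℕ) ≤ (j' : ℕ) := hjj
      rw [hU]; dsimp only
      split <;> split
      · exact humono (by exact hjj')
      · exact (hu _).2
      · omega
      · exact le_refl 1
    set q : Fin (t + 1) → ℝ :=
      fun k => Fin.cases (U 0) (fun i => U i.succ - U (Fin.castSucc i)) k with hqdef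
    have hq0 : q 0 = U 0 := by simp [hqdef]
    have hqs : ∀ i : Fin t, q i.succ = U i.succ - U (Fin.castSucc i) := by
      intro i; simp [hqdef]
    have hsum : ∀ j : Fin (t + 1), ∑ k ∈ Finset.Iic j, q k = U j := by
      intro j
      induction j using Fin.induction with
      | zero => rw [finIicZero, Finset.sum_singleton, hq0]
      | succ i ih => rw [sum_Iic_succ, ih, hqs]; ring
    have hqnn : ∀ k, 0 ≤ q k := by
      intro k
      induction k using Fin.cases with
      | zero => rw [hq0]; exact (hUmem 0).1
      | succ i =>
        rw [hqs]
        exact sub_nonneg.mpr (hUmono (Fin.castSucc_le_succ i))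
    refine ⟨fun m => q (a.symm m), ⟨fun m => hqnn _, ?_⟩, ?_⟩
    · calc ∑ m, q (a.symm m) = ∑ k, q k := Equiv.sum_comp a.symm q
        _ = ∑ k ∈ Finset.Iic (Fin.last t), q k := by rw [finIicLast]
        _ = 1 := by rw [hsum, hUlast]
    · funext i
      show w (∑ k ∈ Finset.Iic (Fin.castSucc i), q (a.symm (a k))) = l i
      have hqq : ∑ k ∈ Finset.Iic (Fin.castSucc i), q (a.symm (a k))
          = ∑ k ∈ Finset.Iic (Fin.castSucc i), q k :=
        Finset.sum_congr rfl fun k _ => by rw [Equiv.symm_apply_apply]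
      rw [hqq, hsum, hUcs, hwu]
  -- the homeomorphism
  have hScomp : IsCompact {p : Fin (t + 1) → ℝ | IsProbVec p} := by
    have hEq : {p : Fin (t + 1) → ℝ | IsProbVec p} = stdSimplex ℝ (Fin (t + 1)) := rfl
    rw [hEq]; exact isCompact_stdSimplex _ _
  haveI : CompactSpace {p : Fin (t + 1) → ℝ // IsProbVec p} :=
    isCompact_iff_compactSpace.mp hScomp
  let f : {p : Fin (t + 1) → ℝ // IsProbVec p} →
      {l : Fin t → ℝ // Monotone l ∧ ∀ i, l i ∈ Set.Icc (0 : ℝ) 1} :=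
    fun pp => ⟨φ pp.1, (hφmem pp.1 pp.2).1, (hφmem pp.1 pp.2).2⟩
  have hfbij : Function.Bijective f := by
    constructor
    · intro pp qq h
      exact Subtype.ext (hφinj _ _ pp.2 qq.2 (congrArg Subtype.val h))
    · rintro ⟨l, hlm, hlb⟩
      obtain ⟨p, hp, hφp⟩ := hφsurj l hlm hlb
      exact ⟨⟨p, hp⟩, Subtype.ext hφp⟩
  have hfc : Continuous f := by
    apply Continuous.subtype_mk
    apply continuous_pi
    intro i
    have hg : Continuous (fun pp : {p : Fin (t + 1) → ℝ // IsProbVec p} =>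
        ∑ k ∈ Finset.Iic (Fin.castSucc i), pp.1 (a k)) :=
      continuous_finset_sum _ fun k _ => (continuous_apply (a k)).comp continuous_subtype_val
    exact hwc.comp_continuous hg fun pp => hmemIcc pp.1 pp.2 _
  let E := Equiv.ofBijective f hfbij
  have hEc : Continuous (E : {p : Fin (t + 1) → ℝ // IsProbVec p} → _) := hfc
  let e := Continuous.homeoOfEquivCompactToT2 (f := E) hEc
  have hecoe : ∀ pp : {p : Fin (t + 1) → ℝ // IsProbVec p}, (e pp : Fin t → ℝ) = φ pp.1 :=
    fun pp => rfl
  -- the linear functional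
  set c : Fin t → ℝ := fun i =>
    (y (a (Fin.castSucc i)) - y (a i.succ)) - (x (a (Fin.castSucc i)) - x (a i.succ))
    with hcdef
  set d : ℝ := x (a (Fin.last t)) - y (a (Fin.last t)) with hddef
  have hiff : ∀ p : Fin (t + 1) → ℝ, IsProbVec p →
      (tildeV w p y ≤ tildeV w p x ↔ ∑ i, c i * φ p i ≤ d) := by
    intro p hp
    rw [tildeV_repr w hw0 hw1 p x hp.2 hx a hax, tildeV_repr w hw0 hw1 p y hp.2 hy a hay]
    have key : ∑ i, c i * φ p i =
        (∑ i : Fin t, w (∑ k ∈ Finset.Iic (Fin.castSucc i), p (a k)) *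
            (y (a (Fin.castSucc i)) - y (a i.succ)))
        - ∑ i : Fin t, w (∑ k ∈ Finset.Iic (Fin.castSucc i), p (a k)) *
            (x (a (Fin.castSucc i)) - x (a i.succ)) := by
      rw [← Finset.sum_sub_distrib]
      refine Finset.sum_congr rfl fun i _ => ?_
      simp only [hcdef, hφdef]
      ring
    constructor <;> intro h <;> linarith [key]
  -- part 2: the image identity
  have himg : φ '' {p | IsProbVec p ∧ tildeV w p y ≤ tildeV w p x}
      = {l : Fin t → ℝ | Monotone l ∧ ∀ i, l i ∈ Set.Icc (0 : ℝ) 1}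
        ∩ {l | ∑ i, c i * l i ≤ d} := by
    ext l
    simp only [Set.mem_image, Set.mem_inter_iff, Set.mem_setOf_eq]
    constructor
    · rintro ⟨p, ⟨hp, hcond⟩, rfl⟩
      exact ⟨hφmem p hp, (hiff p hp).mp hcond⟩
    · rintro ⟨⟨hlm, hlb⟩, hhalf⟩
      obtain ⟨p, hp, hφp⟩ := hφsurj l hlm hlb
      refine ⟨p, ⟨hp, (hiff p hp).mpr ?_⟩, hφp⟩
      rw [hφp]; exact hhalf
  -- convexity of L and the half space
  have hLconv : Convex ℝ {l : Fin t → ℝ | Monotone l ∧ ∀ i, l i ∈ Set.Icc (0 : ℝ) 1} := by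
    intro l hl m hm α β hα hβ hαβ
    constructor
    · intro i j hij
      simp only [Pi.add_apply, Pi.smul_apply, smul_eq_mul]
      exact add_le_add (mul_le_mul_of_nonneg_left (hl.1 hij) hα)
        (mul_le_mul_of_nonneg_left (hm.1 hij) hβ)
    · intro i
      simp only [Pi.add_apply, Pi.smul_apply, smul_eq_mul]
      constructor
      · nlinarith [(hl.2 i).1, (hm.2 i).1]
      · nlinarith [(hl.2 i).2, (hm.2 i).2]
  have hHconv : Convex ℝ {l : Fin t → ℝ | ∑ i, c i * l i ≤ d} := by
    intro l hl m hm α β hα hβ hαβ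
    simp only [Set.mem_setOf_eq] at hl hm ⊢
    have hsum : ∑ i, c i * (α • l + β • m) i
        = α * ∑ i, c i * l i + β * ∑ i, c i * m i := by
      rw [Finset.mul_sum, Finset.mul_sum, ← Finset.sum_add_distrib]
      refine Finset.sum_congr rfl fun i _ => ?_
      simp only [Pi.add_apply, Pi.smul_apply, smul_eq_mul]
      ring
    rw [hsum]
    have hd : α * d + β * d = d := by rw [← add_mul, hαβ, one_mul]
    linarith [mul_le_mul_of_nonneg_left hl hα, mul_le_mul_of_nonneg_left hm hβ]
  have hconv : Convex ℝ (φ '' {p | IsProbVec p ∧ tildeV w p y ≤ tildeV w p x}) := by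
    rw [himg]; exact hLconv.inter hHconv
  -- part 4: preconnectedness
  have hCpre : IsPreconnected
      ({l : Fin t → ℝ | Monotone l ∧ ∀ i, l i ∈ Set.Icc (0 : ℝ) 1}
        ∩ {l | ∑ i, c i * l i ≤ d}) :=
    (hLconv.inter hHconv).isPreconnected
  have hTpre : IsPreconnected
      ((Subtype.val : {l : Fin t → ℝ // Monotone l ∧ ∀ i, l i ∈ Set.Icc (0 : ℝ) 1} → _) ⁻¹'
        ({l : Fin t → ℝ | Monotone l ∧ ∀ i, l i ∈ Set.Icc (0 : ℝ) 1}
          ∩ {l | ∑ i, c i * l i ≤ d})) := by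
    rw [← (Topology.IsInducing.subtypeVal
      (t := {l : Fin t → ℝ | Monotone l ∧ ∀ i, l i ∈ Set.Icc (0 : ℝ) 1})).isPreconnected_image]
    have himgval : (Subtype.val : {l : Fin t → ℝ // Monotone l ∧ ∀ i, l i ∈ Set.Icc (0 : ℝ) 1} → _) ''
        ((Subtype.val : {l : Fin t → ℝ // Monotone l ∧ ∀ i, l i ∈ Set.Icc (0 : ℝ) 1} → _) ⁻¹'
          ({l : Fin t → ℝ | Monotone l ∧ ∀ i, l i ∈ Set.Icc (0 : ℝ) 1}
            ∩ {l | ∑ i, c i * l i ≤ d}))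
        = {l : Fin t → ℝ | Monotone l ∧ ∀ i, l i ∈ Set.Icc (0 : ℝ) 1}
            ∩ {l | ∑ i, c i * l i ≤ d} := by
      apply Set.image_preimage_eq_of_subset
      rw [Subtype.range_coe_subtype]
      exact Set.inter_subset_left
    exact himgval.symm ▸ hCpre
  have himg4 : (fun l : {l : Fin t → ℝ // Monotone l ∧ ∀ i, l i ∈ Set.Icc (0 : ℝ) 1} =>
        ((e.symm l : {p : Fin (t + 1) → ℝ // IsProbVec p}) : Fin (t + 1) → ℝ)) ''
        ((Subtype.val : {l : Fin t → ℝ // Monotone l ∧ ∀ i, l i ∈ Set.Icc (0 : ℝ) 1} → _) ⁻¹'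
          ({l : Fin t → ℝ | Monotone l ∧ ∀ i, l i ∈ Set.Icc (0 : ℝ) 1}
            ∩ {l | ∑ i, c i * l i ≤ d}))
      = {p : Fin (t + 1) → ℝ | IsProbVec p ∧ tildeV w p y ≤ tildeV w p x} := by
    ext p
    simp only [Set.mem_image, Set.mem_preimage, Set.mem_setOf_eq]
    constructor
    · rintro ⟨l, hl, rfl⟩
      rw [← himg] at hl
      obtain ⟨p', hp'S, hφ'⟩ := hl
      have heq : e ⟨p', hp'S.1⟩ = l := Subtype.ext (by rw [hecoe]; exact hφ')
      rw [← heq, Homeomorph.symm_apply_apply]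
      exact hp'S
    · intro hp
      refine ⟨e ⟨p, hp.1⟩, ?_, by rw [Homeomorph.symm_apply_apply]⟩
      rw [← himg]
      exact ⟨p, hp, (hecoe ⟨p, hp.1⟩).symm⟩
  have hpre : IsPreconnected {p : Fin (t + 1) → ℝ | IsProbVec p ∧ tildeV w p y ≤ tildeV w p x} := by
    rw [← himg4]
    exact hTpre.image _ (continuous_subtype_val.comp e.symm.continuous).continuousOn
  exact ⟨⟨e, fun pp => hecoe pp⟩, ⟨c, d, himg⟩, hconv, hpre⟩
end

section
/- There exist a continuous, strictly increasing probability weighting function w : [0,1] → [0,1] with w(0) = 0 and w(1) = 1, and nonnegative outcome profiles x, y, z ∈ ℝ³, such that the intersection of two single-deviation constraint sets {p ∈ Δ² : Ṽ(p,x) ≥ Ṽ(p,y)} ∩ {p ∈ Δ² : Ṽ(p,x) ≥ Ṽ(p,z)} is a nonempty disconnected subset of Δ². (A witness is the Prelec weighting function w(p) = exp(−(−ln p)^{1/2}) (with w(0)=0) together with x = (69, 61, 20), y = (101, 41, 0), and z = (50, 60, 30), arising from a 3×3 game whose set of CPT correlated equilibria is disconnected.) -/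
noncomputable def w0 : ℝ → ℝ := fun t =>
  -(3/10) + (17/10)*t - (4/5)*|t - 1/4| + (1/10)*|t - 1/2| + (3/5)*|t - 3/4|

lemma w0_strictMono : StrictMono w0 := by
  intro s t hst
  have h1 := abs_sub_abs_le_abs_sub (t - 1/4) (s - 1/4)
  have h2 := abs_sub_abs_le_abs_sub (s - 1/2) (t - 1/2)
  have h3 := abs_sub_abs_le_abs_sub (s - 3/4) (t - 3/4)
  have e1 : |t - 1/4 - (s - 1/4)| = t - s := by
    rw [show t - 1/4 - (s - 1/4) = t - s by ring, abs_of_pos (by linarith)]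
  have e2 : |s - 1/2 - (t - 1/2)| = t - s := by
    rw [show s - 1/2 - (t - 1/2) = -(t - s) by ring, abs_neg, abs_of_pos (by linarith)]
  have e3 : |s - 3/4 - (t - 3/4)| = t - s := by
    rw [show s - 3/4 - (t - 3/4) = -(t - s) by ring, abs_neg, abs_of_pos (by linarith)]
  simp only [w0]
  rw [e1] at h1; rw [e2] at h2; rw [e3] at h3
  nlinarith

lemma w0_cont : Continuous w0 := by
  unfold w0; fun_prop

lemma w0_zero : w0 0 = 0 := by
  simp only [w0]
  rw [abs_of_nonpos (by norm_num), abs_of_nonpos (by norm_num), abs_of_nonpos (by norm_num)]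
  norm_num

lemma w0_one : w0 1 = 1 := by
  simp only [w0]
  rw [abs_of_nonneg (by norm_num), abs_of_nonneg (by norm_num), abs_of_nonneg (by norm_num)]
  norm_num

lemma w0_half : w0 (1/2) = 1/2 := by
  simp only [w0]
  rw [show (1:ℝ)/2 - 1/4 = 1/4 by norm_num, show (1:ℝ)/2 - 1/2 = 0 by norm_num,
      show (1:ℝ)/2 - 3/4 = -(1/4) by norm_num, abs_neg, abs_zero,
      abs_of_nonneg (by norm_num : (0:ℝ) ≤ 1/4)]
  norm_num

/-- Key separation inequality along the line `u + v = 1/4`. -/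
lemma w0_sep (u v : ℝ) (hu : 0 ≤ u) (hv : 0 ≤ v) (huv : u + v = 1/4) :
    2 < w0 u + w0 v + w0 (1 - u) + w0 (1 - v) := by
  have hu4 : u ≤ 1/4 := by linarith
  have hv4 : v ≤ 1/4 := by linarith
  simp only [w0]
  rw [abs_of_nonpos (by linarith : u - 1/4 ≤ 0), abs_of_nonpos (by linarith : u - 1/2 ≤ 0),
      abs_of_nonpos (by linarith : u - 3/4 ≤ 0),
      abs_of_nonpos (by linarith : v - 1/4 ≤ 0), abs_of_nonpos (by linarith : v - 1/2 ≤ 0),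
      abs_of_nonpos (by linarith : v - 3/4 ≤ 0),
      abs_of_nonneg (by linarith : (0:ℝ) ≤ 1 - u - 1/4),
      abs_of_nonneg (by linarith : (0:ℝ) ≤ 1 - u - 1/2),
      abs_of_nonneg (by linarith : (0:ℝ) ≤ 1 - u - 3/4),
      abs_of_nonneg (by linarith : (0:ℝ) ≤ 1 - v - 1/4),
      abs_of_nonneg (by linarith : (0:ℝ) ≤ 1 - v - 1/2),
      abs_of_nonneg (by linarith : (0:ℝ) ≤ 1 - v - 3/4)]
  linarith

lemma Iic0' : Finset.Iic (0 : Fin 3) = {0} := by decide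
lemma Iic1' : Finset.Iic (1 : Fin 3) = {0,1} := by decide
lemma Iic2' : Finset.Iic (2 : Fin 3) = {0,1,2} := by decide
lemma Iio0' : Finset.Iio (0 : Fin 3) = ∅ := by decide
lemma Iio1' : Finset.Iio (1 : Fin 3) = {0} := by decide
lemma Iio2' : Finset.Iio (2 : Fin 3) = {0,1} := by decide

lemma tildeV_x (w : ℝ → ℝ) (p : Fin 3 → ℝ) :
    tildeV w p ![1,1,1] = w (p 0 + p 1 + p 2) - w 0 := by
  have hs : Tuple.sort (fun j => -(![(1:ℝ),1,1] j)) = Equiv.refl _ := by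
    rw [Tuple.sort_eq_refl_iff_monotone]
    intro i j hij
    fin_cases i <;> fin_cases j <;> simp_all
  rw [tildeV, CPT, hs, cptVal, Fin.sum_univ_three]
  simp [Iic0', Iic1', Iic2', Iio0', Iio1', Iio2']
  ring

lemma tildeV_y (w : ℝ → ℝ) (p : Fin 3 → ℝ) :
    tildeV w p ![2,1,0] = w (p 0) + w (p 0 + p 1) - 2 * w 0 := by
  have hs : Tuple.sort (fun j => -(![(2:ℝ),1,0] j)) = Equiv.refl _ := by
    rw [Tuple.sort_eq_refl_iff_monotone]
    intro i j hij
    fin_cases i <;> fin_cases j <;> simp_all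
  rw [tildeV, CPT, hs, cptVal, Fin.sum_univ_three]
  simp [Iic0', Iic1', Iic2', Iio0', Iio1', Iio2']
  ring

lemma tildeV_z (w : ℝ → ℝ) (p : Fin 3 → ℝ) :
    tildeV w p ![0,1,2] = w (p 2) + w (p 2 + p 1) - 2 * w 0 := by
  have hs : Tuple.sort (fun j => -(![(0:ℝ),1,2] j)) = Equiv.swap 0 2 := by
    symm
    rw [Tuple.eq_sort_iff]
    constructor
    · intro i j hij
      fin_cases i <;> fin_cases j <;> simp_all [Equiv.swap_apply_def]
    · intro i j hij hf
      fin_cases i <;> fin_cases j <;> simp_all [Equiv.swap_apply_def]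
  rw [tildeV, CPT, hs, cptVal, Fin.sum_univ_three]
  simp [Iic0', Iic1', Iic2', Iio0', Iio1', Iio2', Equiv.swap_apply_def]
  ring

lemma probvec_010 : IsProbVec (![0,1,0] : Fin 3 → ℝ) := by
  constructor
  · intro j; fin_cases j <;> norm_num
  · simp [Fin.sum_univ_three]

lemma probvec_half : IsProbVec (![1/2,0,1/2] : Fin 3 → ℝ) := by
  constructor
  · intro j; fin_cases j <;> norm_num
  · simp [Fin.sum_univ_three]; norm_num

lemma sat_010_y : tildeV w0 ![0,1,0] ![2,1,0] ≤ tildeV w0 ![0,1,0] ![1,1,1] := by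
  rw [tildeV_y, tildeV_x]; simp [w0_zero]

lemma sat_010_z : tildeV w0 ![0,1,0] ![0,1,2] ≤ tildeV w0 ![0,1,0] ![1,1,1] := by
  rw [tildeV_z, tildeV_x]; simp [w0_zero]

lemma sat_half_y : tildeV w0 ![1/2,0,1/2] ![2,1,0] ≤ tildeV w0 ![1/2,0,1/2] ![1,1,1] := by
  rw [tildeV_y, tildeV_x]
  norm_num [w0_zero, w0_one, w0_half, Matrix.cons_val_two, Matrix.tail_cons, Matrix.head_cons]

lemma sat_half_z : tildeV w0 ![1/2,0,1/2] ![0,1,2] ≤ tildeV w0 ![1/2,0,1/2] ![1,1,1] := by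
  rw [tildeV_z, tildeV_x]
  norm_num [w0_zero, w0_one, w0_half, Matrix.cons_val_two, Matrix.tail_cons, Matrix.head_cons]

/-- there exist a probability weighting function `w` (continuous,
strictly increasing, `w 0 = 0`, `w 1 = 1`) and nonnegative outcome profiles
`x, y, z ∈ ℝ³` such that the intersection of the two single-deviation constraint
sets `{p ∈ Δ² : Ṽ(p,x) ≥ Ṽ(p,y)}` and `{p ∈ Δ² : Ṽ(p,x) ≥ Ṽ(p,z)}` is nonempty
and disconnected. -/
theorem exists_disconnected_intersection_of_constraint_sets :
    ∃ (w : ℝ → ℝ) (x y z : Fin 3 → ℝ),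
      ContinuousOn w (Set.Icc 0 1) ∧ StrictMonoOn w (Set.Icc 0 1) ∧
      w 0 = 0 ∧ w 1 = 1 ∧
      (∀ j, 0 ≤ x j) ∧ (∀ j, 0 ≤ y j) ∧ (∀ j, 0 ≤ z j) ∧
      ({p : Fin 3 → ℝ | IsProbVec p ∧ tildeV w p y ≤ tildeV w p x} ∩
          {p : Fin 3 → ℝ | IsProbVec p ∧ tildeV w p z ≤ tildeV w p x}).Nonempty ∧
      ¬ IsPreconnected
        ({p : Fin 3 → ℝ | IsProbVec p ∧ tildeV w p y ≤ tildeV w p x} ∩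
          {p : Fin 3 → ℝ | IsProbVec p ∧ tildeV w p z ≤ tildeV w p x}) := by
  have hmem1 : (![0,1,0] : Fin 3 → ℝ) ∈
      ({p : Fin 3 → ℝ | IsProbVec p ∧ tildeV w0 p ![2,1,0] ≤ tildeV w0 p ![1,1,1]} ∩
        {p : Fin 3 → ℝ | IsProbVec p ∧ tildeV w0 p ![0,1,2] ≤ tildeV w0 p ![1,1,1]}) :=
    ⟨⟨probvec_010, sat_010_y⟩, ⟨probvec_010, sat_010_z⟩⟩
  have hmem2 : (![1/2,0,1/2] : Fin 3 → ℝ) ∈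
      ({p : Fin 3 → ℝ | IsProbVec p ∧ tildeV w0 p ![2,1,0] ≤ tildeV w0 p ![1,1,1]} ∩
        {p : Fin 3 → ℝ | IsProbVec p ∧ tildeV w0 p ![0,1,2] ≤ tildeV w0 p ![1,1,1]}) :=
    ⟨⟨probvec_half, sat_half_y⟩, ⟨probvec_half, sat_half_z⟩⟩
  refine ⟨w0, ![1,1,1], ![2,1,0], ![0,1,2],
    w0_cont.continuousOn, w0_strictMono.strictMonoOn _, w0_zero, w0_one,
    ?_, ?_, ?_, ⟨_, hmem1⟩, ?_⟩
  · intro j; fin_cases j <;> norm_num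
  · intro j; fin_cases j <;> norm_num
  · intro j; fin_cases j <;> norm_num
  intro h
  set S := ({p : Fin 3 → ℝ | IsProbVec p ∧ tildeV w0 p ![2,1,0] ≤ tildeV w0 p ![1,1,1]} ∩
        {p : Fin 3 → ℝ | IsProbVec p ∧ tildeV w0 p ![0,1,2] ≤ tildeV w0 p ![1,1,1]}) with hS
  have hcont : Continuous (fun p : Fin 3 → ℝ => p 0 + p 2) :=
    (continuous_apply 0).add (continuous_apply 2)
  have hU : IsOpen {p : Fin 3 → ℝ | p 0 + p 2 < 1/4} := isOpen_lt hcont continuous_const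
  have hV : IsOpen {p : Fin 3 → ℝ | 1/4 < p 0 + p 2} := isOpen_lt continuous_const hcont
  have hkey : ∀ p ∈ S, p 0 + p 2 ≠ 1/4 := by
    rintro p ⟨⟨⟨hnn, hsum⟩, hy⟩, ⟨_, hz⟩⟩ heq
    rw [tildeV_y, tildeV_x] at hy
    rw [tildeV_z, tildeV_x] at hz
    rw [Fin.sum_univ_three] at hsum
    rw [w0_zero] at hy hz
    have h01 : p 0 + p 1 = 1 - p 2 := by linarith
    have h21 : p 2 + p 1 = 1 - p 0 := by linarith
    rw [h01] at hy; rw [h21] at hz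
    rw [show 1 - p 2 + p 2 = (1:ℝ) by ring, w0_one] at hy
    rw [hsum, w0_one] at hz
    have := w0_sep (p 0) (p 2) (hnn 0) (hnn 2) heq
    linarith
  have hcover : S ⊆ {p : Fin 3 → ℝ | p 0 + p 2 < 1/4} ∪ {p : Fin 3 → ℝ | 1/4 < p 0 + p 2} := by
    intro p hp
    rcases lt_trichotomy (p 0 + p 2) (1/4) with hlt | heq | hgt
    · exact Or.inl hlt
    · exact absurd heq (hkey p hp)
    · exact Or.inr hgt
  have hne1 : (S ∩ {p : Fin 3 → ℝ | p 0 + p 2 < 1/4}).Nonempty := by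
    refine ⟨![0,1,0], hmem1, ?_⟩
    simp only [Set.mem_setOf_eq]
    norm_num [Matrix.cons_val_two, Matrix.tail_cons, Matrix.head_cons]
  have hne2 : (S ∩ {p : Fin 3 → ℝ | 1/4 < p 0 + p 2}).Nonempty := by
    refine ⟨![1/2,0,1/2], hmem2, ?_⟩
    simp only [Set.mem_setOf_eq]
    norm_num [Matrix.cons_val_two, Matrix.tail_cons, Matrix.head_cons]
  obtain ⟨q, hqS, hq1, hq2⟩ := h _ _ hU hV hcover hne1 hne2
  simp only [Set.mem_setOf_eq] at hq1 hq2
  linarith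
end
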